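/- The vector β5 = e1+e2+e3+e4+e5+e6 is a magic labelling of G2 (with magic sum 2), it satisfies the identity β5 = β1 + β2 + β3 − β4 in ℤ^9, and β5 is not a nonnegative real linear combination of β1, β2, β3, β4. -/

import Mathlib

/-- Magic labelling of the graph G2 with magic sum `s`. -/
def MagicG2 (x : Fin 9 → ℕ) (s : ℕ) : Prop :=
  x 3 + x 5 + x 7 = s ∧ x 0 + x 1 + x 6 = s ∧ x 3 + x 4 + x 8 = s ∧
  x 1 + x 2 + x 7 = s ∧ x 4 + x 5 + x 6 = s ∧ x 0 + x 2 + x 8 = s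

def beta5N : Fin 9 → ℕ := ![1, 1, 1, 1, 1, 1, 0, 0, 0]

def beta1Z : Fin 9 → ℤ := ![1, 0, 0, 0, 1, 0, 0, 1, 0]
def beta2Z : Fin 9 → ℤ := ![0, 1, 0, 0, 0, 1, 0, 0, 1]
def beta3Z : Fin 9 → ℤ := ![0, 0, 1, 1, 0, 0, 1, 0, 0]
def beta4Z : Fin 9 → ℤ := ![0, 0, 0, 0, 0, 0, 1, 1, 1]
def beta5Z : Fin 9 → ℤ := ![1, 1, 1, 1, 1, 1, 0, 0, 0]

def beta1R : Fin 9 → ℝ := ![1, 0, 0, 0, 1, 0, 0, 1, 0]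
def beta2R : Fin 9 → ℝ := ![0, 1, 0, 0, 0, 1, 0, 0, 1]
def beta3R : Fin 9 → ℝ := ![0, 0, 1, 1, 0, 0, 1, 0, 0]
def beta4R : Fin 9 → ℝ := ![0, 0, 0, 0, 0, 0, 1, 1, 1]
def beta5R : Fin 9 → ℝ := ![1, 1, 1, 1, 1, 1, 0, 0, 0]

theorem magicG2_beta5N : MagicG2 beta5N 2 :=
  ⟨rfl, rfl, rfl, rfl, rfl, rfl⟩

theorem beta5Z_eq : beta5Z = beta1Z + beta2Z + beta3Z - beta4Z := by
  ext i
  fin_cases i <;> rfl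

/- Among β1, …, β4 only β3 has a nonzero e4-coordinate, and only β3 and β4 have a nonzero
e7-coordinate, while β5 has e4-coordinate 1 and e7-coordinate 0. -/
theorem coeff_beta4R_eq_neg_one {c : Fin 4 → ℝ}
    (h : beta5R = c 0 • beta1R + c 1 • beta2R + c 2 • beta3R + c 3 • beta4R) :
    c 3 = -1 := by
  have h_e4 := congrFun h 3
  have h_e7 := congrFun h 6
  simp only [beta5R, Fin.isValue, Matrix.cons_val, beta1R, Matrix.smul_cons, smul_eq_mul, mul_one,
    mul_zero, Matrix.smul_empty, beta2R, Matrix.add_cons, Matrix.head_cons, add_zero,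
    Matrix.tail_cons, zero_add, Matrix.empty_add_empty, beta3R, beta4R, Pi.add_apply] at h_e4 h_e7
  linarith

theorem stmt_4 :
    MagicG2 beta5N 2 ∧
    beta5Z = beta1Z + beta2Z + beta3Z - beta4Z ∧
    ¬ ∃ c : Fin 4 → ℝ, (∀ i, 0 ≤ c i) ∧
        beta5R = c 0 • beta1R + c 1 • beta2R + c 2 • beta3R + c 3 • beta4R := by
  refine ⟨magicG2_beta5N, beta5Z_eq, ?_⟩
  rintro ⟨c, hc_nonneg, h⟩
  linarith [hc_nonneg 3, coeff_beta4R_eq_neg_one h]
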